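/- With notation as in the level-k setup, let C be a conjugacy class of G, fix x_0 ∈ C and set y_0 := x_0^{−1}. Let H be a head, i.e. an orbit of L_k × G on L_{k,C} := {(g_1,…,g_k,x) : g_i ∈ C_i, x ∈ C, g_1⋯g_k x = 1}, and let T be a tail, i.e. an orbit of R_k × G on R_{k,C^{−1}} := {(y,g_{k+1},…,g_r) : y ∈ C^{−1}, g_i ∈ C_i, y g_{k+1}⋯g_r = 1}. Then the shadow H_0 := {h ∈ H : the last coordinate of h equals x_0} is a single orbit of L_k × C_G(x_0), and the shadow T_0 := {t ∈ T : the first coordinate of t equals y_0} is a single orbit of R_k × C_G(x_0), where C_G(x_0) acts by diagonal conjugation. -/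

import Mathlib

/-- The braid move `Q_i` (`0`-indexed): it replaces the entries in positions `i` and `i+1`
of a tuple `(g_0, …, g_{r-1})` by `g_{i+1}` and `g_{i+1}⁻¹ * g_i * g_{i+1}` respectively,
leaving all other entries unchanged.  (For `i + 1 ≥ r` it is the identity.) -/
def braidMove {G : Type*} [Group G] {r : ℕ} (i : ℕ) (g : Fin r → G) : Fin r → G :=
  fun m =>
    if _hm : (m : ℕ) = i then
      if h : i + 1 < r then g ⟨i + 1, h⟩ else g m
    else if hm' : (m : ℕ) = i + 1 then
      (g m)⁻¹ * g ⟨i, by have := m.isLt; omega⟩ * g m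
    else g m

/-- The braid relations on `n` generators `Q_0, …, Q_{n-1}`. -/
def braidRels (n : ℕ) : Set (FreeGroup (Fin n)) :=
  {w | (∃ i j : Fin n, (i : ℕ) + 1 = (j : ℕ) ∧
          w = FreeGroup.of i * FreeGroup.of j * FreeGroup.of i *
              (FreeGroup.of j * FreeGroup.of i * FreeGroup.of j)⁻¹) ∨
       (∃ i j : Fin n, (i : ℕ) + 2 ≤ (j : ℕ) ∧
          w = FreeGroup.of i * FreeGroup.of j * (FreeGroup.of j * FreeGroup.of i)⁻¹)}

/-- The Artin braid group on `r` strings, presented by `r - 1` generators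
subject to the braid relations. -/
abbrev BraidGroup (r : ℕ) : Type := PresentedGroup (braidRels (r - 1))

/-- Diagonal conjugation of a tuple by a group element `h`. -/
def diagConj {G : Type*} [Group G] {n : ℕ} (h : G) (g : Fin n → G) : Fin n → G :=
  fun m => h⁻¹ * g m * h

/-- The set `T^o(C_1, …, C_r)` of generating product-one tuples with `τ_i ∈ C_i`
for every `i`. -/
def nielsenTuples {G : Type*} [Group G] {r : ℕ} (C : Fin r → Set G) : Set (Fin r → G) :=
  {τ | (∀ m, τ m ∈ C m) ∧ (List.ofFn τ).prod = 1 ∧ Subgroup.closure (Set.range τ) = ⊤}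
/-- Membership in the parabolic subgroup `B_P`: a braid `b` lies in `B_P` iff the underlying
permutation `π b` preserves the class vector `C`. -/
def inBP {G : Type*} [Group G] {r : ℕ} (C : Fin r → Set G)
    (π : BraidGroup r →* Equiv.Perm (Fin r)) (b : BraidGroup r) : Prop :=
  ∀ m : Fin r, C (π b m) = C m

/-- Generators of `L_k`: the braid generators `Q_m` with `m + 1 < k` (0-indexed),
touching only the first `k` strings. -/
def LkGens (r k : ℕ) : Set (BraidGroup r) :=
  {x | ∃ m : Fin (r - 1), (m : ℕ) + 1 < k ∧ x = PresentedGroup.of m}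

/-- Generators of `R_k`: the braid generators `Q_m` with `k ≤ m` (0-indexed),
touching only the last `r - k` strings. -/
def RkGens (r k : ℕ) : Set (BraidGroup r) :=
  {x | ∃ m : Fin (r - 1), k ≤ (m : ℕ) ∧ x = PresentedGroup.of m}

/-- Membership in `L_k := ⟨Q_m : m + 1 < k⟩ ⊓ B_P`. -/
def inLk {G : Type*} [Group G] {r : ℕ} (C : Fin r → Set G)
    (π : BraidGroup r →* Equiv.Perm (Fin r)) (k : ℕ) (b : BraidGroup r) : Prop :=
  b ∈ Subgroup.closure (LkGens r k) ∧ inBP C π b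

/-- Membership in `R_k := ⟨Q_m : k ≤ m⟩ ⊓ B_P`. -/
def inRk {G : Type*} [Group G] {r : ℕ} (C : Fin r → Set G)
    (π : BraidGroup r →* Equiv.Perm (Fin r)) (k : ℕ) (b : BraidGroup r) : Prop :=
  b ∈ Subgroup.closure (RkGens r k) ∧ inBP C π b

/-- A node: an orbit of `L_k × R_k × G` on `T^o(C_1, …, C_r)`, where the braid group acts
through `φ` and `G` acts by diagonal conjugation. -/
def IsNode {G : Type*} [Group G] {r : ℕ} (C : Fin r → Set G)
    (π : BraidGroup r →* Equiv.Perm (Fin r)) (φ : BraidGroup r →* Equiv.Perm (Fin r → G))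
    (k : ℕ) (N : Set (Fin r → G)) : Prop :=
  ∃ τ₀ ∈ nielsenTuples C, N = {τ | ∃ l ρ : BraidGroup r, inLk C π k l ∧ inRk C π k ρ ∧
    ∃ h : G, τ = diagConj h (φ (l * ρ) τ₀)}

/-- The head of an `r`-tuple at level `k`: `(g_1, …, g_k, (g_1 ⋯ g_k)⁻¹)`. -/
def headOf {G : Type*} [Group G] {r k : ℕ} (hk : k ≤ r) (g : Fin r → G) : Fin (k + 1) → G :=
  fun m => if h : (m : ℕ) < k then g ⟨(m : ℕ), lt_of_lt_of_le h hk⟩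
    else (((List.ofFn g).take k).prod)⁻¹

/-- The tail of an `r`-tuple at level `k`: `(g_1 ⋯ g_k, g_{k+1}, …, g_r)`. -/
def tailOf {G : Type*} [Group G] {r k : ℕ} (hk : k ≤ r) (g : Fin r → G) :
    Fin (r - k + 1) → G :=
  fun m => if _h : (m : ℕ) = 0 then ((List.ofFn g).take k).prod
    else g ⟨k + (m : ℕ) - 1, by have := m.isLt; omega⟩
/-- The set `L_{k,C}` of head tuples `(g_1, …, g_k, x)` with `g_i ∈ C_i`, `x ∈ C` and
`g_1 ⋯ g_k x = 1`. -/
def LkC {G : Type*} [Group G] {r : ℕ} (C' : Fin r → Set G) {k : ℕ} (hk : k ≤ r)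
    (C : Set G) : Set (Fin (k + 1) → G) :=
  {t | (∀ m : Fin (k + 1), ∀ h : (m : ℕ) < k, t m ∈ C' ⟨(m : ℕ), lt_of_lt_of_le h hk⟩) ∧
       t ⟨k, Nat.lt_succ_self k⟩ ∈ C ∧ (List.ofFn t).prod = 1}

/-- The set `R_{k,D}` of tail tuples `(y, g_{k+1}, …, g_r)` with `y ∈ D`, `g_i ∈ C_i` and
`y g_{k+1} ⋯ g_r = 1`. -/
def RkD {G : Type*} [Group G] {r : ℕ} (C' : Fin r → Set G) {k : ℕ} (hk : k ≤ r)
    (D : Set G) : Set (Fin (r - k + 1) → G) :=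
  {t | t ⟨0, by omega⟩ ∈ D ∧
       (∀ m : Fin (r - k + 1), ∀ h : 0 < (m : ℕ),
         t m ∈ C' ⟨k + (m : ℕ) - 1, by have := m.isLt; omega⟩) ∧
       (List.ofFn t).prod = 1}

/-- A head: an orbit of `L_k × G` on `L_{k,C}`, the braid part acting through `ψL` and `G`
acting by diagonal conjugation. -/
def IsHead {G : Type*} [Group G] {r : ℕ} (C' : Fin r → Set G)
    (π : BraidGroup r →* Equiv.Perm (Fin r)) {k : ℕ} (hk : k ≤ r) (C : Set G)
    (ψL : ↥(Subgroup.closure (LkGens r k)) →* Equiv.Perm (Fin (k + 1) → G))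
    (H : Set (Fin (k + 1) → G)) : Prop :=
  ∃ t₀ ∈ LkC C' hk C,
    H = {t | ∃ (l : BraidGroup r) (hl : l ∈ Subgroup.closure (LkGens r k)),
      inBP C' π l ∧ ∃ h : G, t = diagConj h (ψL ⟨l, hl⟩ t₀)}

/-- A tail: an orbit of `R_k × G` on `R_{k,D}`, the braid part acting through `ψR` and `G`
acting by diagonal conjugation. -/
def IsTail {G : Type*} [Group G] {r : ℕ} (C' : Fin r → Set G)
    (π : BraidGroup r →* Equiv.Perm (Fin r)) {k : ℕ} (hk : k ≤ r) (D : Set G)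
    (ψR : ↥(Subgroup.closure (RkGens r k)) →* Equiv.Perm (Fin (r - k + 1) → G))
    (T : Set (Fin (r - k + 1) → G)) : Prop :=
  ∃ t₀ ∈ RkD C' hk D,
    T = {t | ∃ (ρ : BraidGroup r) (hρ : ρ ∈ Subgroup.closure (RkGens r k)),
      inBP C' π ρ ∧ ∃ h : G, t = diagConj h (ψR ⟨ρ, hρ⟩ t₀)}
section ShadowAux

variable {G : Type*} [Group G]

lemma diagConj_diagConj {n : ℕ} (a b : G) (g : Fin n → G) :
    diagConj a (diagConj b g) = diagConj (b * a) g := by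
  funext m; simp [diagConj, mul_assoc]

lemma diagConj_one {n : ℕ} (g : Fin n → G) : diagConj (1 : G) g = g := by
  funext m; simp [diagConj]

/-- Permutations of tuples that fix the `j`-th coordinate and commute with diagonal
conjugation form a subgroup. -/
def goodPerms {n : ℕ} (j : Fin n) : Subgroup (Equiv.Perm (Fin n → G)) where
  carrier := {σ | (∀ g, σ g j = g j) ∧ ∀ h g, σ (diagConj h g) = diagConj h (σ g)}
  one_mem' := ⟨fun _ => rfl, fun _ _ => rfl⟩
  mul_mem' := fun ha hb =>
    ⟨fun g => by simp only [Equiv.Perm.mul_apply, ha.1, hb.1],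
     fun h g => by simp only [Equiv.Perm.mul_apply, hb.2, ha.2]⟩
  inv_mem' := fun {a} ha =>
    ⟨fun g => by
      conv_rhs => rw [← Equiv.apply_symm_apply a g]
      rw [ha.1, Equiv.Perm.coe_inv],
     fun h g => by
      have : diagConj h g = a (diagConj h (a⁻¹ g)) := by rw [ha.2, Equiv.Perm.coe_inv, Equiv.apply_symm_apply]
      rw [this, Equiv.Perm.coe_inv, Equiv.symm_apply_apply]⟩

lemma mem_goodPerms {n : ℕ} (j : Fin n) (σ : Equiv.Perm (Fin n → G)) :
    σ ∈ goodPerms j ↔ (∀ g, σ g j = g j) ∧ ∀ h g, σ (diagConj h g) = diagConj h (σ g) :=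
  Iff.rfl

lemma braidMove_apply_ne {n : ℕ} (i : ℕ) (g : Fin n → G) (j : Fin n)
    (h1 : (j : ℕ) ≠ i) (h2 : (j : ℕ) ≠ i + 1) : braidMove i g j = g j := by
  simp [braidMove, h1, h2]

lemma braidMove_diagConj {n : ℕ} (i : ℕ) (h : G) (g : Fin n → G) :
    braidMove i (diagConj h g) = diagConj h (braidMove i g) := by
  funext m
  simp only [braidMove, diagConj]
  split_ifs <;> group

lemma psi_mem_goodPerms {n r : ℕ} (Sgen : Set (BraidGroup r))
    (ψ : ↥(Subgroup.closure Sgen) →* Equiv.Perm (Fin n → G)) (j : Fin n)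
    (hgen : ∀ s (hs : s ∈ Sgen), ψ ⟨s, Subgroup.subset_closure hs⟩ ∈ goodPerms j)
    (x : BraidGroup r) (hx : x ∈ Subgroup.closure Sgen) :
    ψ ⟨x, hx⟩ ∈ goodPerms (G := G) j := by
  induction hx using Subgroup.closure_induction with
  | mem s hs => exact hgen s hs
  | one =>
    rw [show (⟨(1 : BraidGroup r), one_mem _⟩ : ↥(Subgroup.closure Sgen)) = 1 from rfl,
      map_one]
    exact one_mem _
  | mul a b ha hb iha ihb =>
    rw [show (⟨a * b, mul_mem ha hb⟩ : ↥(Subgroup.closure Sgen)) =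
      (⟨a, ha⟩ : ↥(Subgroup.closure Sgen)) * ⟨b, hb⟩ from rfl, map_mul]
    exact mul_mem iha ihb
  | inv a ha iha =>
    rw [show (⟨a⁻¹, inv_mem ha⟩ : ↥(Subgroup.closure Sgen)) =
      (⟨a, ha⟩ : ↥(Subgroup.closure Sgen))⁻¹ from rfl, map_inv]
    exact inv_mem iha

/-- Generic shadow lemma: if every element of the acting braid subgroup acts by a
permutation that fixes the `j`-th coordinate and commutes with diagonal conjugation,
then the shadow of an orbit at a fixed value `z` of the `j`-th coordinate is a single
orbit of the braid subgroup together with the centralizer of `x₀`. -/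
lemma shadow_orbit {n r : ℕ} {C' : Fin r → Set G}
    (π : BraidGroup r →* Equiv.Perm (Fin r)) (Sgen : Set (BraidGroup r))
    (ψ : ↥(Subgroup.closure Sgen) →* Equiv.Perm (Fin n → G)) (j : Fin n)
    (hgood : ∀ x (hx : x ∈ Subgroup.closure Sgen), ψ ⟨x, hx⟩ ∈ goodPerms (G := G) j)
    (z x₀ : G) (hcent : ∀ c : G, c ∈ Subgroup.centralizer {x₀} ↔ c⁻¹ * z * c = z)
    (t₀ : Fin n → G) (ht₀ : ∃ c : G, c⁻¹ * t₀ j * c = z)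
    (H : Set (Fin n → G))
    (hH : H = {t | ∃ (l : BraidGroup r) (hl : l ∈ Subgroup.closure Sgen),
      inBP C' π l ∧ ∃ h : G, t = diagConj h (ψ ⟨l, hl⟩ t₀)}) :
    ∃ s₀ ∈ {t ∈ H | t j = z},
      {t ∈ H | t j = z} =
        {t | ∃ (l : BraidGroup r) (hl : l ∈ Subgroup.closure Sgen),
          inBP C' π l ∧ ∃ c ∈ Subgroup.centralizer {x₀},
            t = diagConj c (ψ ⟨l, hl⟩ s₀)} := by
  obtain ⟨c₀, hc₀⟩ := ht₀
  have hone : (1 : BraidGroup r) ∈ Subgroup.closure Sgen := one_mem _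
  have hBP1 : inBP C' π 1 := by
    intro m; rw [map_one]; rfl
  have hψ1 : ψ ⟨(1 : BraidGroup r), hone⟩ = 1 := map_one ψ
  refine ⟨diagConj c₀ t₀, ⟨?_, hc₀⟩, ?_⟩
  · rw [hH]
    exact ⟨1, hone, hBP1, c₀, by rw [hψ1]; rfl⟩
  · have hs₀j : diagConj c₀ t₀ j = z := hc₀
    ext t
    constructor
    · rintro ⟨htH, htj⟩
      rw [hH] at htH
      obtain ⟨l, hl, hBP, h, rfl⟩ := htH
      obtain ⟨hfix, hcomm⟩ := (mem_goodPerms j _).mp (hgood l hl)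
      have key : diagConj h ((ψ ⟨l, hl⟩) t₀) =
          diagConj (c₀⁻¹ * h) ((ψ ⟨l, hl⟩) (diagConj c₀ t₀)) := by
        rw [hcomm, diagConj_diagConj, mul_inv_cancel_left]
      refine ⟨l, hl, hBP, c₀⁻¹ * h, (hcent _).mpr ?_, key⟩
      have : diagConj h ((ψ ⟨l, hl⟩) t₀) j =
          (c₀⁻¹ * h)⁻¹ * z * (c₀⁻¹ * h) := by
        rw [key]; show _ * (ψ ⟨l, hl⟩) (diagConj c₀ t₀) j * _ = _
        rw [hfix, hs₀j]
      rw [this] at htj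
      exact htj
    · rintro ⟨l, hl, hBP, c, hc, rfl⟩
      obtain ⟨hfix, hcomm⟩ := (mem_goodPerms j _).mp (hgood l hl)
      constructor
      · rw [hH]
        exact ⟨l, hl, hBP, c₀ * c, by rw [hcomm, diagConj_diagConj]⟩
      · show c⁻¹ * (ψ ⟨l, hl⟩) (diagConj c₀ t₀) j * c = z
        rw [hfix, hs₀j]
        exact (hcent c).mp hc

end ShadowAux

/-- Level-`k` setup as before.  Let `C` be a conjugacy class of `G`, fix `x₀ ∈ C` and set
`y₀ := x₀⁻¹`.  Let `H` be a head (an orbit of `L_k × G` on `L_{k,C}`) and `T` a tail (an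
orbit of `R_k × G` on `R_{k,C⁻¹}`).  Then the shadow `H₀` of `H` (the heads with last
coordinate `x₀`) is a single orbit of `L_k × C_G(x₀)`, and the shadow `T₀` of `T` (the
tails with first coordinate `y₀`) is a single orbit of `R_k × C_G(x₀)`, where `C_G(x₀)`
acts by diagonal conjugation. -/
theorem head_tail_shadows_are_orbits
    {G : Type*} [Group G] [Fintype G] {r : ℕ} (hr : 2 ≤ r)
    (C' : Fin r → Set G)
    (hC' : ∀ m : Fin r, ∃ x : G, C' m = {y | IsConj x y})
    (hord : ∀ i j k : Fin r, i ≤ k → k ≤ j → C' i = C' j → C' k = C' i)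
    (π : BraidGroup r →* Equiv.Perm (Fin r))
    (hπ : ∀ m : Fin (r - 1),
      π (PresentedGroup.of m) =
        Equiv.swap ⟨(m : ℕ), by have := m.isLt; omega⟩
          ⟨(m : ℕ) + 1, by have := m.isLt; omega⟩)
    (k : ℕ) (hk1 : 1 < k) (hk2 : k < r)
    (ψL : ↥(Subgroup.closure (LkGens r k)) →* Equiv.Perm (Fin (k + 1) → G))
    (hψL : ∀ (m : Fin (r - 1)) (hm : (m : ℕ) + 1 < k) (g : Fin (k + 1) → G),
      ψL ⟨PresentedGroup.of m, Subgroup.subset_closure ⟨m, hm, rfl⟩⟩ g = braidMove (m : ℕ) g)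
    (ψR : ↥(Subgroup.closure (RkGens r k)) →* Equiv.Perm (Fin (r - k + 1) → G))
    (hψR : ∀ (m : Fin (r - 1)) (hm : k ≤ (m : ℕ)) (g : Fin (r - k + 1) → G),
      ψR ⟨PresentedGroup.of m, Subgroup.subset_closure ⟨m, hm, rfl⟩⟩ g =
        braidMove ((m : ℕ) - k + 1) g)
    (x₀ : G) (C : Set G) (hx₀ : x₀ ∈ C) (hCclass : C = {y | IsConj x₀ y})
    (H : Set (Fin (k + 1) → G)) (hH : IsHead C' π hk2.le C ψL H)
    (T : Set (Fin (r - k + 1) → G))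
    (hT : IsTail C' π hk2.le {y | y⁻¹ ∈ C} ψR T) :
    (∃ t₀ ∈ {t ∈ H | t ⟨k, Nat.lt_succ_self k⟩ = x₀},
      {t ∈ H | t ⟨k, Nat.lt_succ_self k⟩ = x₀} =
        {t | ∃ (l : BraidGroup r) (hl : l ∈ Subgroup.closure (LkGens r k)),
          inBP C' π l ∧ ∃ c ∈ Subgroup.centralizer {x₀}, t = diagConj c (ψL ⟨l, hl⟩ t₀)}) ∧
    (∃ t₀ ∈ {t ∈ T | t ⟨0, by omega⟩ = x₀⁻¹},
      {t ∈ T | t ⟨0, by omega⟩ = x₀⁻¹} =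
        {t | ∃ (ρ : BraidGroup r) (hρ : ρ ∈ Subgroup.closure (RkGens r k)),
          inBP C' π ρ ∧ ∃ c ∈ Subgroup.centralizer {x₀}, t = diagConj c (ψR ⟨ρ, hρ⟩ t₀)}) := by
  obtain ⟨t₀L, ht₀L, rfl⟩ := hH
  obtain ⟨t₀R, ht₀R, rfl⟩ := hT
  have hcentL : ∀ c : G, c ∈ Subgroup.centralizer {x₀} ↔ c⁻¹ * x₀ * c = x₀ := by
    intro c
    rw [Subgroup.mem_centralizer_singleton_iff]
    constructor
    · intro h
      rw [mul_assoc, ← h, inv_mul_cancel_left]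
    · intro h
      calc c * x₀ = c * (c⁻¹ * x₀ * c) := by rw [h]
        _ = x₀ * c := by group
  have hcentR : ∀ c : G, c ∈ Subgroup.centralizer {x₀} ↔ c⁻¹ * x₀⁻¹ * c = x₀⁻¹ := by
    intro c
    rw [hcentL]
    constructor
    · intro h
      calc c⁻¹ * x₀⁻¹ * c = (c⁻¹ * x₀ * c)⁻¹ := by group
        _ = x₀⁻¹ := by rw [h]
    · intro h
      calc c⁻¹ * x₀ * c = (c⁻¹ * x₀⁻¹ * c)⁻¹ := by group
        _ = x₀ := by rw [h, inv_inv]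
  have hgoodL : ∀ x (hx : x ∈ Subgroup.closure (LkGens r k)),
      ψL ⟨x, hx⟩ ∈ goodPerms (G := G) ⟨k, Nat.lt_succ_self k⟩ := by
    refine psi_mem_goodPerms _ _ _ ?_
    rintro s ⟨m, hm, rfl⟩
    rw [mem_goodPerms]
    constructor
    · intro g
      rw [hψL m hm g]
      exact braidMove_apply_ne _ _ _ (by simp only [Fin.val_mk]; omega) (by simp only [Fin.val_mk]; omega)
    · intro h g
      rw [hψL m hm, hψL m hm]
      exact braidMove_diagConj _ _ _
  have hgoodR : ∀ x (hx : x ∈ Subgroup.closure (RkGens r k)),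
      ψR ⟨x, hx⟩ ∈ goodPerms (G := G) ⟨0, by omega⟩ := by
    refine psi_mem_goodPerms _ _ _ ?_
    rintro s ⟨m, hm, rfl⟩
    rw [mem_goodPerms]
    constructor
    · intro g
      rw [hψR m hm g]
      exact braidMove_apply_ne _ _ _ (by simp only [Fin.val_mk]; omega) (by simp only [Fin.val_mk]; omega)
    · intro h g
      rw [hψR m hm, hψR m hm]
      exact braidMove_diagConj _ _ _
  constructor
  · refine shadow_orbit π (LkGens r k) ψL ⟨k, Nat.lt_succ_self k⟩ hgoodL x₀ x₀ hcentL
      t₀L ?_ _ rfl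
    have := ht₀L.2.1
    rw [hCclass] at this
    obtain ⟨c, hc⟩ := this
    have hc' : (c : G) * x₀ = t₀L ⟨k, Nat.lt_succ_self k⟩ * (c : G) := hc
    refine ⟨(c : G), ?_⟩
    rw [mul_assoc, ← hc', inv_mul_cancel_left]
  · refine shadow_orbit π (RkGens r k) ψR ⟨0, by omega⟩ hgoodR x₀⁻¹ x₀ hcentR
      t₀R ?_ _ rfl
    have h0 := ht₀R.1
    rw [hCclass] at h0
    obtain ⟨c, hc⟩ := h0
    have hc' : (c : G) * x₀ = (t₀R ⟨0, by omega⟩)⁻¹ * (c : G) := hc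
    have h1 : (c : G)⁻¹ * (t₀R ⟨0, by omega⟩)⁻¹ * (c : G) = x₀ := by
      rw [mul_assoc, ← hc', inv_mul_cancel_left]
    refine ⟨(c : G), ?_⟩
    calc (c : G)⁻¹ * t₀R ⟨0, by omega⟩ * (c : G)
        = ((c : G)⁻¹ * (t₀R ⟨0, by omega⟩)⁻¹ * (c : G))⁻¹ := by group
      _ = x₀⁻¹ := by rw [h1]
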